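/- arXiv:1710.06562 — 3 statements merged into one kernel-verified Lean document; each statement's English description precedes it below -/
import Mathlib

section
/- Let T > 0 and let f, y₁, y₂ : [0,T] → ℝ be continuous with y₁(0) = y₂(0), f(0) + y₁(0) ≥ 0, and suppose y₁(t) − y₁(s) > y₂(t) − y₂(s) for all 0 ≤ s < t ≤ T. Then the reflected paths satisfy x_{f+y₁}(t) ≥ x_{f+y₂}(t) for all t ∈ [0,T]. -/
open Set

/-- The Skorohod reflection term: `m_f(t) = sup_{0 ≤ s ≤ t} max(-f(s), 0)`. -/
noncomputable def mf (f : ℝ → ℝ) (t : ℝ) : ℝ :=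
  sSup ((fun s => max (-f s) 0) '' Set.Icc 0 t)

/-! With `d = y₁ - y₂`, which is nondecreasing and vanishes at `0`, we have `f + y₂ = g - d` for
`g = f + y₁`. Pointwise `max (-(g s - d s)) 0 ≤ max (-g s) 0 + d s ≤ m_g(t) + d(t)` for `s ≤ t`,
so `m_{g-d}(t) ≤ m_g(t) + d(t)`, which is exactly `x_{g-d}(t) ≤ x_g(t)`. -/

theorem mf_nonneg (g : ℝ → ℝ) (t : ℝ) : 0 ≤ mf g t :=
  Real.sSup_nonneg <| by
    rintro _ ⟨s, -, rfl⟩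
    exact le_max_right _ _

theorem bddAbove_mf_set {g : ℝ → ℝ} {t : ℝ} (hg : ContinuousOn g (Icc 0 t)) :
    BddAbove ((fun s => max (-g s) 0) '' Icc 0 t) :=
  (isCompact_Icc.image_of_continuousOn (hg.neg.sup continuousOn_const)).bddAbove

theorem le_mf {g : ℝ → ℝ} {s t : ℝ} (hg : ContinuousOn g (Icc 0 t)) (hs : s ∈ Icc 0 t) :
    max (-g s) 0 ≤ mf g t :=
  le_csSup (bddAbove_mf_set hg) ⟨s, hs, rfl⟩

theorem mf_sub_le {g d : ℝ → ℝ} {t : ℝ} (hg : ContinuousOn g (Icc 0 t))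
    (hd : MonotoneOn d (Icc 0 t)) (hd0 : 0 ≤ d 0) (ht : 0 ≤ t) :
    mf (fun u => g u - d u) t ≤ mf g t + d t := by
  have hd_nonneg : ∀ s ∈ Icc 0 t, 0 ≤ d s := fun s hs =>
    hd0.trans (hd (left_mem_Icc.2 ht) hs hs.1)
  refine Real.sSup_le ?_ (add_nonneg (mf_nonneg g t) (hd_nonneg t (right_mem_Icc.2 ht)))
  rintro _ ⟨s, hs, rfl⟩
  calc max (-(g s - d s)) 0 ≤ max (-g s) 0 + d s :=
        max_le (by linarith [le_max_left (-g s) 0]) (add_nonneg (le_max_right _ _) (hd_nonneg s hs))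
    _ ≤ mf g t + d t := add_le_add (le_mf hg hs) (hd hs (right_mem_Icc.2 ht) hs.2)

theorem strictMonoOn_sub_of_increment_lt {y₁ y₂ : ℝ → ℝ} {T : ℝ}
    (hincr : ∀ s t : ℝ, 0 ≤ s → s < t → t ≤ T → y₂ t - y₂ s < y₁ t - y₁ s) :
    StrictMonoOn (fun u => y₁ u - y₂ u) (Icc 0 T) := by
  intro s hs t ht hst
  have := hincr s t hs.1 hst ht.2
  dsimp only
  linarith

theorem stmt_4_general (T : ℝ) (f y₁ y₂ : ℝ → ℝ)
    (hf : ContinuousOn f (Set.Icc 0 T))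
    (hy₁ : ContinuousOn y₁ (Set.Icc 0 T))
    (h0 : y₁ 0 = y₂ 0)
    (hincr : ∀ s t : ℝ, 0 ≤ s → s < t → t ≤ T → y₂ t - y₂ s < y₁ t - y₁ s) :
    ∀ t ∈ Set.Icc 0 T,
      (f t + y₂ t) + mf (fun u => f u + y₂ u) t ≤
      (f t + y₁ t) + mf (fun u => f u + y₁ u) t := by
  rintro t ⟨ht0, htT⟩
  have hsub : Icc 0 t ⊆ Icc 0 T := Icc_subset_Icc_right htT
  have hd : MonotoneOn (fun u => y₁ u - y₂ u) (Icc 0 t) :=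
    ((strictMonoOn_sub_of_increment_lt hincr).mono hsub).monotoneOn
  have key : mf (fun u => f u + y₂ u) t ≤ mf (fun u => f u + y₁ u) t + (y₁ t - y₂ t) := by
    convert mf_sub_le (g := fun u => f u + y₁ u) ((hf.add hy₁).mono hsub) hd (by simp [h0]) ht0
      using 3
    ring
  linarith

/-- Comparison of reflected paths: if the increments of `y₁` strictly dominate those of
`y₂`, then the reflected path of `f + y₁` dominates that of `f + y₂` on `[0,T]`. -/
theorem stmt_4 (T : ℝ) (hT : 0 < T) (f y₁ y₂ : ℝ → ℝ)
    (hf : ContinuousOn f (Set.Icc 0 T))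
    (hy₁ : ContinuousOn y₁ (Set.Icc 0 T)) (hy₂ : ContinuousOn y₂ (Set.Icc 0 T))
    (h0 : y₁ 0 = y₂ 0) (hinit : 0 ≤ f 0 + y₁ 0)
    (hincr : ∀ s t : ℝ, 0 ≤ s → s < t → t ≤ T → y₂ t - y₂ s < y₁ t - y₁ s) :
    ∀ t ∈ Set.Icc 0 T,
      (f t + y₂ t) + mf (fun u => f u + y₂ u) t ≤
      (f t + y₁ t) + mf (fun u => f u + y₁ u) t :=
  stmt_4_general T f y₁ y₂ hf hy₁ h0 hincr
end

section
/- Lipschitz property of the Skorohod-map drift: fix T > 0, n ≥ 1, v ∈ ℝ, K ≥ 0, and let f = (f₁,…,f_n) and g = (g₁,…,g_n) be continuous functions on [0,T]. Let (I_f, V_f) and (I_g, V_g) be the solutions of the Skorohod system for (f, v, K) and (g, v, K) respectively. If ‖f − g‖_{[0,T]} < η, then ‖I_f − I_g‖_{[0,T]} ≤ (K η / n) T exp(K T). -/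
open Set MeasureTheory

/-- The supremum norm of `h` over `[a,b]`: `‖h‖_{[a,b]} = sup_{t ∈ [a,b]} |h(t)|`. -/
noncomputable def supNorm (h : ℝ → ℝ) (a b : ℝ) : ℝ :=
  sSup ((fun t => |h t|) '' Set.Icc a b)

/-- `(I, V)` is a solution of the multiparticle Skorohod system for data `(f, v, K)`:
with `m_i(t) = sup_{0 ≤ s ≤ t} max(-(f_i(s) + I(s)), 0)`, one has
`V(t) = -v + (K/n) ∑ᵢ m_i(t)` and `I(t) = ∫₀ᵗ V(s) ds` on `[0,T]`. -/
def IsSkorohodSystemSol (T : ℝ) (n : ℕ) (f : Fin n → ℝ → ℝ) (v K : ℝ)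
    (I V : ℝ → ℝ) : Prop :=
  ContinuousOn I (Set.Icc 0 T) ∧ ContinuousOn V (Set.Icc 0 T) ∧
  (∀ t ∈ Set.Icc 0 T,
    V t = -v + (K / (n : ℝ)) * ∑ i, mf (fun s => f i s + I s) t) ∧
  (∀ t ∈ Set.Icc 0 T, I t = ∫ s in (0:ℝ)..t, V s)

/-!
Put `ψ t = ∫₀ᵗ |V_f - V_g|`. Then `|I_f - I_g| ≤ ψ t` on `[0, t]`, and since the reflection
term `m` is `1`-Lipschitz for the sup norm, `|V_f - V_g| (t) ≤ K ψ t + (K / n) ‖f - g‖`.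
Grönwall's inequality for `ψ` then gives `ψ T ≤ (K ‖f - g‖ / n) T exp (K T)`.
-/

open Topology

section SupNorm

variable {h : ℝ → ℝ} {a b : ℝ}

lemma abs_le_supNorm (hh : ContinuousOn h (Icc a b)) {s : ℝ} (hs : s ∈ Icc a b) :
    |h s| ≤ supNorm h a b :=
  le_csSup (isCompact_Icc.image_of_continuousOn hh.abs).bddAbove ⟨s, hs, rfl⟩

lemma supNorm_nonneg (hh : ContinuousOn h (Icc a b)) (hab : a ≤ b) : 0 ≤ supNorm h a b :=
  (abs_nonneg _).trans (abs_le_supNorm hh ⟨le_rfl, hab⟩)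

lemma supNorm_le {C : ℝ} (hC : 0 ≤ C) (hle : ∀ s ∈ Icc a b, |h s| ≤ C) : supNorm h a b ≤ C :=
  Real.sSup_le (by rintro _ ⟨s, hs, rfl⟩; exact hle s hs) hC

end SupNorm

lemma csSup_image_le_csSup_image_add {α : Type*} {S : Set α} {φ ψ : α → ℝ} {c : ℝ}
    (hS : S.Nonempty) (hψ : BddAbove (ψ '' S)) (hle : ∀ s ∈ S, φ s ≤ ψ s + c) :
    sSup (φ '' S) ≤ sSup (ψ '' S) + c :=
  csSup_le (hS.image φ) <| by
    rintro _ ⟨s, hs, rfl⟩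
    exact (hle s hs).trans (by gcongr; exact le_csSup hψ ⟨s, hs, rfl⟩)

section Reflection

variable {u w : ℝ → ℝ} {t c : ℝ}

lemma mf_le_mf_add (ht : 0 ≤ t) (hw : ContinuousOn w (Icc 0 t))
    (hc : ∀ s ∈ Icc 0 t, |u s - w s| ≤ c) : mf u t ≤ mf w t + c :=
  csSup_image_le_csSup_image_add ⟨0, le_rfl, ht⟩ (isCompact_Icc.image_of_continuousOn
    ((continuous_neg.max continuous_const).comp_continuousOn hw)).bddAbove fun s hs => by
      have := (abs_max_sub_max_le_abs (-u s) (-w s) 0).trans_eq (abs_sub_comm _ _)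
      rw [neg_sub_neg] at this
      linarith [le_abs_self (max (-u s) 0 - max (-w s) 0), hc s hs]

lemma abs_mf_sub_mf_le (ht : 0 ≤ t) (hu : ContinuousOn u (Icc 0 t))
    (hw : ContinuousOn w (Icc 0 t)) (hc : ∀ s ∈ Icc 0 t, |u s - w s| ≤ c) :
    |mf u t - mf w t| ≤ c := by
  rw [abs_sub_le_iff]
  constructor
  · linarith [mf_le_mf_add ht hw hc]
  · linarith [mf_le_mf_add ht hu fun s hs => (abs_sub_comm _ _).trans_le (hc s hs)]

end Reflection

lemma exp_sub_one_le_mul_exp (y : ℝ) : Real.exp y - 1 ≤ y * Real.exp y := by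
  have h := Real.add_one_le_exp (-y)
  rw [Real.exp_neg] at h
  have := mul_le_mul_of_nonneg_right h (Real.exp_pos y).le
  rw [inv_mul_cancel₀ (Real.exp_pos y).ne'] at this
  linarith

lemma gronwallBound_zero_le {K ε x : ℝ} (hK : 0 ≤ K) (hε : 0 ≤ ε) :
    gronwallBound 0 K ε x ≤ ε * x * Real.exp (K * x) := by
  rcases hK.eq_or_lt with rfl | hK
  · simp [gronwallBound_K0]
  · simp only [gronwallBound_of_K_ne_0 hK.ne', zero_mul, zero_add]
    calc ε / K * (Real.exp (K * x) - 1) ≤ ε / K * (K * x * Real.exp (K * x)) := by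
          gcongr; exact exp_sub_one_le_mul_exp _
      _ = ε * x * Real.exp (K * x) := by field_simp

lemma hasDerivWithinAt_integral_Ici {φ : ℝ → ℝ} {a b x : ℝ} (hφ : ContinuousOn φ (Icc a b))
    (hx : x ∈ Ico a b) : HasDerivWithinAt (fun t => ∫ s in a..t, φ s) (φ x) (Ici x) x := by
  have hmem : Icc a b ∈ 𝓝[>] x := Icc_mem_nhdsGT_of_mem hx
  refine intervalIntegral.integral_hasDerivWithinAt_right
    ((hφ.mono ?_).intervalIntegrable) ⟨Icc a b, hmem, hφ.aestronglyMeasurable measurableSet_Icc⟩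
    ((hφ x (Ico_subset_Icc_self hx)).mono_of_mem_nhdsWithin hmem)
  rw [uIcc_of_le hx.1]
  exact Icc_subset_Icc le_rfl hx.2.le

lemma integral_le_gronwallBound {φ : ℝ → ℝ} {K ε a b : ℝ} (hφ : ContinuousOn φ (Icc a b))
    (hle : ∀ t ∈ Icc a b, φ t ≤ K * (∫ s in a..t, φ s) + ε) :
    ∀ t ∈ Icc a b, ∫ s in a..t, φ s ≤ gronwallBound 0 K ε (t - a) := by
  intro t ht
  have hprim : ContinuousOn (fun t => ∫ s in a..t, φ s) (Icc a b) := by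
    have := intervalIntegral.continuousOn_primitive_interval (μ := volume)
      (hφ.integrableOn_Icc.mono_set (uIcc_of_le (ht.1.trans ht.2)).subset)
    rwa [uIcc_of_le (ht.1.trans ht.2)] at this
  exact le_gronwallBound_of_liminf_deriv_right_le hprim
    (fun x hx _ hr => (hasDerivWithinAt_integral_Ici hφ hx).liminf_right_slope_le hr)
    (by simp) (fun x hx => hle x (Ico_subset_Icc_self hx)) t ht

lemma abs_integral_le_integral_abs_of_mem_Icc {φ : ℝ → ℝ} {a s t : ℝ}
    (hφ : IntervalIntegrable φ volume a t) (hs : s ∈ Icc a t) :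
    |∫ x in a..s, φ x| ≤ ∫ x in a..t, |φ x| :=
  (intervalIntegral.abs_integral_le_integral_abs hs.1).trans <|
    intervalIntegral.integral_mono_interval (μ := volume) le_rfl hs.1 hs.2
      (Filter.Eventually.of_forall fun _ => abs_nonneg _) hφ.abs

namespace IsSkorohodSystemSol

variable {T : ℝ} {n : ℕ} {f g : Fin n → ℝ → ℝ} {v K : ℝ} {If Vf Ig Vg : ℝ → ℝ}

lemma abs_sub_le_integral (hsolf : IsSkorohodSystemSol T n f v K If Vf)
    (hsolg : IsSkorohodSystemSol T n g v K Ig Vg) {t : ℝ} (ht : t ∈ Icc 0 T) :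
    ∀ s ∈ Icc 0 t, |If s - Ig s| ≤ ∫ x in (0:ℝ)..t, |Vf x - Vg x| := by
  intro s hs
  have hsub : uIcc 0 t ⊆ Icc 0 T := by
    rw [uIcc_of_le ht.1]; exact Icc_subset_Icc le_rfl ht.2
  have hVf := (hsolf.2.1.mono hsub).intervalIntegrable (μ := volume)
  have hVg := (hsolg.2.1.mono hsub).intervalIntegrable (μ := volume)
  have hsuIcc : uIcc 0 s ⊆ uIcc 0 t := uIcc_subset_uIcc_left (Icc_subset_uIcc hs)
  have hsT : s ∈ Icc 0 T := ⟨hs.1, hs.2.trans ht.2⟩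
  rw [hsolf.2.2.2 s hsT, hsolg.2.2.2 s hsT, ← intervalIntegral.integral_sub
    (hVf.mono_set hsuIcc) (hVg.mono_set hsuIcc)]
  exact abs_integral_le_integral_abs_of_mem_Icc (hVf.sub hVg) hs

lemma abs_sub_le (hsolf : IsSkorohodSystemSol T n f v K If Vf)
    (hsolg : IsSkorohodSystemSol T n g v K Ig Vg) (hK : 0 ≤ K)
    (hf : ∀ i, ContinuousOn (f i) (Icc 0 T)) (hg : ∀ i, ContinuousOn (g i) (Icc 0 T))
    {t c : ℝ} (ht : t ∈ Icc 0 T) (hc : ∀ s ∈ Icc 0 t, |If s - Ig s| ≤ c) :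
    |Vf t - Vg t| ≤ K * c + K / n * ∑ i, supNorm (fun s => f i s - g i s) 0 T := by
  have hsub : Icc 0 t ⊆ Icc 0 T := Icc_subset_Icc le_rfl ht.2
  have hc0 : 0 ≤ c := (abs_nonneg _).trans (hc 0 ⟨le_rfl, ht.1⟩)
  have hKn : 0 ≤ K / n := by positivity
  have hterm (i : Fin n) : |mf (fun s => f i s + If s) t - mf (fun s => g i s + Ig s) t| ≤
      supNorm (fun s => f i s - g i s) 0 T + c := by
    refine abs_mf_sub_mf_le ht.1 (((hf i).add hsolf.1).mono hsub)
      (((hg i).add hsolg.1).mono hsub) fun s hs => ?_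
    calc |f i s + If s - (g i s + Ig s)| = |(f i s - g i s) + (If s - Ig s)| := by ring_nf
      _ ≤ |f i s - g i s| + |If s - Ig s| := abs_add_le _ _
      _ ≤ _ := add_le_add (abs_le_supNorm ((hf i).sub (hg i)) (hsub hs)) (hc s hs)
  have hKn_mul : K / n * n ≤ K := by
    rcases eq_or_ne (n : ℝ) 0 with hn | hn
    · simp [hn, hK]
    · rw [div_mul_cancel₀ K hn]
  have hdiff : Vf t - Vg t =
      K / n * ∑ i, (mf (fun s => f i s + If s) t - mf (fun s => g i s + Ig s) t) := by
    rw [hsolf.2.2.1 t ht, hsolg.2.2.1 t ht, Finset.sum_sub_distrib]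
    ring
  calc |Vf t - Vg t|
      = K / n * |∑ i, (mf (fun s => f i s + If s) t - mf (fun s => g i s + Ig s) t)| := by
        rw [hdiff, abs_mul, abs_of_nonneg hKn]
    _ ≤ K / n * ∑ i, (supNorm (fun s => f i s - g i s) 0 T + c) := by
        gcongr
        exact (Finset.abs_sum_le_sum_abs _ _).trans (Finset.sum_le_sum fun i _ => hterm i)
    _ = K / n * n * c + K / n * ∑ i, supNorm (fun s => f i s - g i s) 0 T := by
        rw [Finset.sum_add_distrib, Finset.sum_const, Finset.card_univ, Fintype.card_fin,
          nsmul_eq_mul]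
        ring
    _ ≤ K * c + K / n * ∑ i, supNorm (fun s => f i s - g i s) 0 T := by gcongr

end IsSkorohodSystemSol

theorem stmt_9_general (T : ℝ) (hT : 0 < T) (n : ℕ)
    (v K : ℝ) (hK : 0 ≤ K)
    (f g : Fin n → ℝ → ℝ)
    (hf : ∀ i, ContinuousOn (f i) (Set.Icc 0 T))
    (hg : ∀ i, ContinuousOn (g i) (Set.Icc 0 T))
    (If Vf Ig Vg : ℝ → ℝ)
    (hsolf : IsSkorohodSystemSol T n f v K If Vf)
    (hsolg : IsSkorohodSystemSol T n g v K Ig Vg)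
    (η : ℝ)
    (hη : (∑ i, supNorm (fun t => f i t - g i t) 0 T) < η) :
    supNorm (fun t => If t - Ig t) 0 T ≤ (K * η / (n : ℝ)) * T * Real.exp (K * T) := by
  set S := ∑ i, supNorm (fun t => f i t - g i t) 0 T
  have hS : 0 ≤ S := Finset.sum_nonneg fun i _ => supNorm_nonneg ((hf i).sub (hg i)) hT.le
  have hη0 : 0 ≤ η := hS.trans hη.le
  have hTmem : T ∈ Icc 0 T := ⟨hT.le, le_rfl⟩
  have hV (t) (ht : t ∈ Icc 0 T) :
      |Vf t - Vg t| ≤ K * (∫ x in (0:ℝ)..t, |Vf x - Vg x|) + K / n * S :=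
    hsolf.abs_sub_le hsolg hK hf hg ht (hsolf.abs_sub_le_integral hsolg ht)
  have hgron : ∫ x in (0:ℝ)..T, |Vf x - Vg x| ≤ K / n * S * T * Real.exp (K * T) := by
    have := integral_le_gronwallBound (hsolf.2.1.sub hsolg.2.1).abs hV T hTmem
    rw [sub_zero] at this
    exact this.trans (gronwallBound_zero_le hK (by positivity))
  have hmono : K / n * S * T * Real.exp (K * T) ≤ K * η / n * T * Real.exp (K * T) := by
    rw [mul_div_right_comm]; gcongr
  exact supNorm_le (by positivity) fun s hs =>
    (hsolf.abs_sub_le_integral hsolg hTmem s hs).trans (hgron.trans hmono)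

/-- Lipschitz property of the Skorohod-map drift: if `‖f - g‖_{[0,T]} < η`, then
`‖I_f - I_g‖_{[0,T]} ≤ (Kη/n) T exp(KT)`. -/
theorem stmt_9 (T : ℝ) (hT : 0 < T) (n : ℕ) (hn : 1 ≤ n)
    (v K : ℝ) (hK : 0 ≤ K)
    (f g : Fin n → ℝ → ℝ)
    (hf : ∀ i, ContinuousOn (f i) (Set.Icc 0 T))
    (hg : ∀ i, ContinuousOn (g i) (Set.Icc 0 T))
    (If Vf Ig Vg : ℝ → ℝ)
    (hsolf : IsSkorohodSystemSol T n f v K If Vf)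
    (hsolg : IsSkorohodSystemSol T n g v K Ig Vg)
    (η : ℝ)
    (hη : (∑ i, supNorm (fun t => f i t - g i t) 0 T) < η) :
    supNorm (fun t => If t - Ig t) 0 T ≤ (K * η / (n : ℝ)) * T * Real.exp (K * T) :=
  stmt_9_general T hT n v K hK f g hf hg If Vf Ig Vg hsolf hsolg η hη
end

section
/- Uniform Lipschitz bound for the Euler approximations: fix T > 0, n ≥ 1, continuous f₁,…,f_n : [0,T] → ℝ with f_i(0) ≥ 0 for each i, and K ≥ 0, with initial velocity v = 0. Then for every ε > 0 the function I^{(ε)} is nondecreasing and convex on [0,T], and is Lipschitz with Lipschitz constant at most (K/n) ∑_{i=1}^n sup_{0 ≤ u ≤ T} max(−f_i(u), 0); in particular this bound is independent of ε. -/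
open Set

/-! On each grid cell `[Mε, (M+1)ε]` the approximation `J` is affine, with slope
`(K/n) ∑ᵢ sup_{[0,Mε]} max(-(fᵢ + J), 0)` (and `0` on the first cell). A continuous function that
is affine on consecutive cells is convex as soon as the slopes increase, and is Lipschitz with
any bound on the slopes. All slopes are nonnegative, so `J` is nondecreasing and `J ≥ J(0) = 0`.
Hence `max(-(fᵢ + J), 0) ≤ max(-fᵢ, 0)`, so the suprema over the growing intervals `[0,Mε]`
increase with `M` and never exceed the supremum of `max(-fᵢ, 0)` over `[0,T]`. -/

/-- `J` is the piecewise linear Euler approximation with mesh `ε` for the data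
`(f, K)` (initial velocity `v = 0`): `J ≡ 0` on `[0, ε] ∩ [0,T]`, and on each
subsequent grid interval `[Mε, (M+1)ε] ∩ [0,T]` (for `M ≥ 1`) it is linear with slope
`(K/n) ∑ᵢ sup_{0 ≤ u ≤ Mε} max(-(f_i(u) + J(u)), 0)`. -/
def IsEulerApprox (T : ℝ) (n : ℕ) (f : Fin n → ℝ → ℝ) (K ε : ℝ)
    (J : ℝ → ℝ) : Prop :=
  (∀ t ∈ Set.Icc 0 (min ε T), J t = 0) ∧
  ∀ M : ℕ, 1 ≤ M →
    ∀ t ∈ Set.Icc ((M : ℝ) * ε) (((M : ℝ) + 1) * ε) ∩ Set.Icc (0:ℝ) T,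
      J t = J ((M : ℝ) * ε) +
        (K / (n : ℝ)) *
          (∑ i, sSup ((fun u => max (-(f i u + J u)) 0) '' Set.Icc 0 ((M : ℝ) * ε))) *
          (t - (M : ℝ) * ε)

def IsGridAffine (ε T : ℝ) (a : ℕ → ℝ) (J : ℝ → ℝ) : Prop :=
  ∀ M : ℕ, ∀ t ∈ Icc (M * ε) ((M + 1) * ε), t ≤ T → J t = J (M * ε) + a M * (t - M * ε)

lemma mem_Icc_floor_div_mul {ε t : ℝ} (hε : 0 < ε) (ht : 0 ≤ t) :
    t ∈ Icc (⌊t / ε⌋₊ * ε) ((⌊t / ε⌋₊ + 1) * ε) :=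
  ⟨(le_div_iff₀ hε).mp (Nat.floor_le (div_nonneg ht hε.le)),
    ((div_lt_iff₀ hε).mp (Nat.lt_floor_add_one (t / ε))).le⟩

namespace IsGridAffine

variable {ε T : ℝ} {a : ℕ → ℝ} {J : ℝ → ℝ}

lemma neg (hJ : IsGridAffine ε T a J) : IsGridAffine ε T (-a) (-J) := by
  intro M t ht htT
  simp only [Pi.neg_apply, hJ M t ht htT]
  ring

lemma sub_eq_of_mem_cell (hJ : IsGridAffine ε T a J) {M : ℕ} {s t : ℝ}
    (hs : s ∈ Icc (M * ε) ((M + 1) * ε)) (ht : t ∈ Icc (M * ε) ((M + 1) * ε))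
    (hsT : s ≤ T) (htT : t ≤ T) : J t - J s = a M * (t - s) := by
  rw [hJ M t ht htT, hJ M s hs hsT]
  ring

lemma mul_sub_le_sub_of_mem_cell (hJ : IsGridAffine ε T a J) (hε : 0 ≤ ε) {lo : ℝ} {k m : ℕ}
    (hkm : k ≤ m) (hlo : ∀ j, k ≤ j → j ≤ m → lo ≤ a j) {s t : ℝ}
    (hs : s ∈ Icc (k * ε) ((k + 1) * ε)) (ht : t ∈ Icc (m * ε) ((m + 1) * ε))
    (hst : s ≤ t) (htT : t ≤ T) : lo * (t - s) ≤ J t - J s := by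
  induction m generalizing t with
  | zero =>
    obtain rfl : k = 0 := Nat.le_zero.mp hkm
    rw [hJ.sub_eq_of_mem_cell hs ht (hst.trans htT) htT]
    exact mul_le_mul_of_nonneg_right (hlo 0 le_rfl le_rfl) (sub_nonneg.mpr hst)
  | succ m ih =>
    by_cases hsm : ((m + 1 : ℕ) : ℝ) * ε ≤ s
    · rw [hJ.sub_eq_of_mem_cell ⟨hsm, hst.trans ht.2⟩ ht (hst.trans htT) htT]
      exact mul_le_mul_of_nonneg_right (hlo _ hkm le_rfl) (sub_nonneg.mpr hst)
    · -- split `[s, t]` at the left end `p` of the cell of `t`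
      set p : ℝ := ((m + 1 : ℕ) : ℝ) * ε
      have hkm' : k ≤ m := by
        by_contra! hmk
        have : p ≤ k * ε := mul_le_mul_of_nonneg_right (Nat.cast_le.mpr hmk) hε
        exact hsm (this.trans hs.1)
      have hp : p ∈ Icc (m * ε) ((m + 1) * ε) := by
        simp only [p]; push_cast; exact ⟨by linarith, le_rfl⟩
      have hleft := ih hkm' (fun j hkj hjm => hlo j hkj (hjm.trans m.le_succ)) hp
        (not_le.mp hsm).le (ht.1.trans htT)
      have hright := hJ (m + 1) t ht htT
      have hslope := mul_le_mul_of_nonneg_right (hlo (m + 1) hkm le_rfl) (sub_nonneg.mpr ht.1)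
      linarith

lemma sub_le_mul_sub_of_mem_cell (hJ : IsGridAffine ε T a J) (hε : 0 ≤ ε) {hi : ℝ} {k m : ℕ}
    (hkm : k ≤ m) (hhi : ∀ j, k ≤ j → j ≤ m → a j ≤ hi) {s t : ℝ}
    (hs : s ∈ Icc (k * ε) ((k + 1) * ε)) (ht : t ∈ Icc (m * ε) ((m + 1) * ε))
    (hst : s ≤ t) (htT : t ≤ T) : J t - J s ≤ hi * (t - s) := by
  have := hJ.neg.mul_sub_le_sub_of_mem_cell hε (lo := -hi) hkm
    (fun j hkj hjm => neg_le_neg (hhi j hkj hjm)) hs ht hst htT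
  simp only [Pi.neg_apply] at this
  linarith

lemma mul_sub_le_sub (hJ : IsGridAffine ε T a J) (hε : 0 < ε) {lo s t : ℝ}
    (hlo : ∀ j, ⌊s / ε⌋₊ ≤ j → j ≤ ⌊t / ε⌋₊ → lo ≤ a j)
    (hs : 0 ≤ s) (hst : s ≤ t) (htT : t ≤ T) : lo * (t - s) ≤ J t - J s :=
  hJ.mul_sub_le_sub_of_mem_cell hε.le (Nat.floor_mono (div_le_div_of_nonneg_right hst hε.le))
    hlo (mem_Icc_floor_div_mul hε hs) (mem_Icc_floor_div_mul hε (hs.trans hst)) hst htT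

lemma sub_le_mul_sub (hJ : IsGridAffine ε T a J) (hε : 0 < ε) {hi s t : ℝ}
    (hhi : ∀ j, ⌊s / ε⌋₊ ≤ j → j ≤ ⌊t / ε⌋₊ → a j ≤ hi)
    (hs : 0 ≤ s) (hst : s ≤ t) (htT : t ≤ T) : J t - J s ≤ hi * (t - s) :=
  hJ.sub_le_mul_sub_of_mem_cell hε.le (Nat.floor_mono (div_le_div_of_nonneg_right hst hε.le))
    hhi (mem_Icc_floor_div_mul hε hs) (mem_Icc_floor_div_mul hε (hs.trans hst)) hst htT

lemma monotoneOn (hJ : IsGridAffine ε T a J) (hε : 0 < ε) (ha : ∀ M, 0 ≤ a M) :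
    MonotoneOn J (Icc 0 T) := by
  intro s hs t ht hst
  have := hJ.mul_sub_le_sub hε (fun j _ _ => ha j) hs.1 hst ht.2
  linarith

lemma convexOn (hJ : IsGridAffine ε T a J) (hε : 0 < ε)
    (ha : ∀ ⦃k m : ℕ⦄, k ≤ m → m * ε ≤ T → a k ≤ a m) : ConvexOn ℝ (Icc 0 T) J := by
  refine convexOn_of_slope_mono_adjacent (convex_Icc 0 T) fun {x y z} hx hz hxy hyz => ?_
  have hy : 0 ≤ y := hx.1.trans hxy.le
  -- both secant slopes are compared with the slope on the cell of `y`
  have hfloor_le {r : ℝ} (hr : 0 ≤ r) : ⌊r / ε⌋₊ * ε ≤ r := (mem_Icc_floor_div_mul hε hr).1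
  have hleft := hJ.sub_le_mul_sub hε (hi := a ⌊y / ε⌋₊)
    (fun j _ hj => ha hj ((hfloor_le hy).trans (hyz.le.trans hz.2)))
    hx.1 hxy.le (hyz.le.trans hz.2)
  have hright := hJ.mul_sub_le_sub hε (lo := a ⌊y / ε⌋₊)
    (fun j hj hjz => ha hj (le_trans (by gcongr) ((hfloor_le (hy.trans hyz.le)).trans hz.2)))
    hy hyz.le hz.2
  rw [div_le_div_iff₀ (sub_pos.mpr hxy) (sub_pos.mpr hyz)]
  nlinarith [sub_pos.mpr hxy, sub_pos.mpr hyz]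

lemma abs_sub_le (hJ : IsGridAffine ε T a J) (hε : 0 < ε) {L : ℝ}
    (ha : ∀ m : ℕ, m * ε ≤ T → |a m| ≤ L) {s t : ℝ} (hs : s ∈ Icc 0 T) (ht : t ∈ Icc 0 T) :
    |J t - J s| ≤ L * |t - s| := by
  wlog hst : s ≤ t generalizing s t
  · rw [abs_sub_comm, abs_sub_comm t]
    exact this ht hs (le_of_not_ge hst)
  have hcell {j : ℕ} (hj : j ≤ ⌊t / ε⌋₊) : |a j| ≤ L :=
    ha j (le_trans (by gcongr) ((mem_Icc_floor_div_mul hε ht.1).1.trans ht.2))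
  have hlo := hJ.mul_sub_le_sub hε (lo := -L)
    (fun j _ hj => neg_le_of_abs_le (hcell hj)) hs.1 hst ht.2
  have hhi := hJ.sub_le_mul_sub hε (hi := L)
    (fun j _ hj => le_of_abs_le (hcell hj)) hs.1 hst ht.2
  rw [abs_of_nonneg (sub_nonneg.mpr hst), abs_le]
  constructor <;> linarith

end IsGridAffine

lemma le_sSup_negPart {s : Set ℝ} {g h : ℝ → ℝ} (hs : IsCompact s) (hg : ContinuousOn g s)
    (hh : ∀ u ∈ s, 0 ≤ h u) {u : ℝ} (hu : u ∈ s) :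
    max (-(g u + h u)) 0 ≤ sSup ((fun u => max (-g u) 0) '' s) := by
  have hbdd : BddAbove ((fun u => max (-g u) 0) '' s) :=
    hs.bddAbove_image ((continuous_id.max continuous_const).comp_continuousOn hg.neg)
  refine le_trans ?_ (le_csSup hbdd ⟨u, hu, rfl⟩)
  have := hh u hu
  exact max_le_max (by linarith) le_rfl

section EulerApprox

variable {T : ℝ} {n : ℕ} {f : Fin n → ℝ → ℝ} {K ε : ℝ} {J : ℝ → ℝ}

/-- The slope of the Euler approximation on `[Mε, (M+1)ε]`; on the first cell, where the
approximation vanishes, it is `0` whatever the formula would give. -/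
noncomputable def eulerSlope (f : Fin n → ℝ → ℝ) (K : ℝ) (J : ℝ → ℝ) (ε : ℝ) (M : ℕ) : ℝ :=
  if M = 0 then 0
  else (K / n) * ∑ i, sSup ((fun u => max (-(f i u + J u)) 0) '' Icc 0 (M * ε))

lemma IsEulerApprox.apply_zero (hJ : IsEulerApprox T n f K ε J) (hε : 0 ≤ ε) (hT : 0 ≤ T) :
    J 0 = 0 :=
  hJ.1 0 ⟨le_rfl, le_min hε hT⟩

lemma IsEulerApprox.isGridAffine (hJ : IsEulerApprox T n f K ε J) :
    IsGridAffine ε T (eulerSlope f K J ε) J := by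
  intro M t ht htT
  rcases Nat.eq_zero_or_pos M with rfl | hM
  · simp only [Nat.cast_zero, zero_add, one_mul, zero_mul] at ht ⊢
    have hε : 0 ≤ ε := ht.1.trans ht.2
    rw [hJ.1 t ⟨ht.1, le_min ht.2 htT⟩, hJ.apply_zero hε (ht.1.trans htT)]
    simp [eulerSlope]
  · have hε : 0 ≤ ε := by linarith [ht.1.trans ht.2]
    have ht0 : 0 ≤ t := (mul_nonneg M.cast_nonneg hε).trans ht.1
    rw [hJ.2 M hM t ⟨ht, ht0, htT⟩, eulerSlope, if_neg hM.ne']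

lemma eulerSlope_nonneg (hK : 0 ≤ K) (M : ℕ) : 0 ≤ eulerSlope f K J ε M := by
  unfold eulerSlope
  split_ifs
  · exact le_rfl
  · refine mul_nonneg (div_nonneg hK n.cast_nonneg) (Finset.sum_nonneg fun i _ => ?_)
    exact Real.sSup_nonneg (by rintro _ ⟨u, -, rfl⟩; exact le_max_right _ _)

lemma eulerSlope_mono (hK : 0 ≤ K) (hf : ∀ i, ContinuousOn (f i) (Icc 0 T))
    (hJ : ∀ u ∈ Icc 0 T, 0 ≤ J u) (hε : 0 ≤ ε) {k m : ℕ} (hkm : k ≤ m) (hm : m * ε ≤ T) :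
    eulerSlope f K J ε k ≤ eulerSlope f K J ε m := by
  rcases Nat.eq_zero_or_pos k with rfl | hk
  · rw [eulerSlope, if_pos rfl]
    exact eulerSlope_nonneg hK m
  rw [eulerSlope, eulerSlope, if_neg hk.ne', if_neg (hk.trans_le hkm).ne']
  refine mul_le_mul_of_nonneg_left (Finset.sum_le_sum fun i _ => csSup_le_csSup ?_ ?_ ?_)
    (div_nonneg hK n.cast_nonneg)
  · exact ⟨_, by
      rintro _ ⟨u, hu, rfl⟩
      exact le_sSup_negPart isCompact_Icc (hf i) hJ (Icc_subset_Icc_right hm hu)⟩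
  · exact (nonempty_Icc.mpr (by positivity)).image _
  · exact image_mono (Icc_subset_Icc_right (by gcongr))

lemma eulerSlope_le (hK : 0 ≤ K) (hf : ∀ i, ContinuousOn (f i) (Icc 0 T))
    (hJ : ∀ u ∈ Icc 0 T, 0 ≤ J u) {m : ℕ} (hm : m * ε ≤ T) :
    eulerSlope f K J ε m ≤ (K / n) * ∑ i, sSup ((fun u => max (-(f i u)) 0) '' Icc 0 T) := by
  have hsup_nonneg (i : Fin n) : 0 ≤ sSup ((fun u => max (-(f i u)) 0) '' Icc 0 T) :=
    Real.sSup_nonneg (by rintro _ ⟨u, -, rfl⟩; exact le_max_right _ _)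
  have hKn : 0 ≤ K / n := div_nonneg hK n.cast_nonneg
  unfold eulerSlope
  split_ifs
  · exact mul_nonneg hKn (Finset.sum_nonneg fun i _ => hsup_nonneg i)
  refine mul_le_mul_of_nonneg_left (Finset.sum_le_sum fun i _ => ?_) hKn
  refine Real.sSup_le ?_ (hsup_nonneg i)
  rintro _ ⟨u, hu, rfl⟩
  exact le_sSup_negPart isCompact_Icc (hf i) hJ ⟨hu.1, hu.2.trans hm⟩

end EulerApprox

theorem stmt_16_general (T : ℝ) (n : ℕ)
    (f : Fin n → ℝ → ℝ) (hf : ∀ i, ContinuousOn (f i) (Set.Icc 0 T))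
    (K : ℝ) (hK : 0 ≤ K)
    (ε : ℝ) (hε : 0 < ε) (J : ℝ → ℝ) (hJ : IsEulerApprox T n f K ε J) :
    MonotoneOn J (Set.Icc 0 T) ∧
    ConvexOn ℝ (Set.Icc 0 T) J ∧
    ∀ s ∈ Set.Icc 0 T, ∀ t ∈ Set.Icc 0 T,
      |J t - J s| ≤
        ((K / (n : ℝ)) *
          ∑ i, sSup ((fun u => max (-(f i u)) 0) '' Set.Icc 0 T)) * |t - s| := by
  have hgrid := hJ.isGridAffine
  have hmono : MonotoneOn J (Icc 0 T) := hgrid.monotoneOn hε (eulerSlope_nonneg hK)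
  have hJ_nonneg (u : ℝ) (hu : u ∈ Icc 0 T) : 0 ≤ J u := by
    have h0 : (0 : ℝ) ∈ Icc 0 T := ⟨le_rfl, hu.1.trans hu.2⟩
    simpa only [hJ.apply_zero hε.le h0.2] using hmono h0 hu hu.1
  refine ⟨hmono, hgrid.convexOn hε fun k m hkm hm => eulerSlope_mono hK hf hJ_nonneg hε.le hkm hm,
    fun s hs t ht => hgrid.abs_sub_le hε (fun m hm => ?_) hs ht⟩
  rw [abs_of_nonneg (eulerSlope_nonneg hK m)]
  exact eulerSlope_le hK hf hJ_nonneg hm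

/-- Uniform Lipschitz bound for the Euler approximations: every `I^{(ε)}` is
nondecreasing and convex on `[0,T]`, and Lipschitz there with constant
`(K/n) ∑ᵢ sup_{0 ≤ u ≤ T} max(-f_i(u), 0)`, independent of `ε`. -/
theorem stmt_16 (T : ℝ) (hT : 0 < T) (n : ℕ) (hn : 1 ≤ n)
    (f : Fin n → ℝ → ℝ) (hf : ∀ i, ContinuousOn (f i) (Set.Icc 0 T))
    (hf0 : ∀ i, 0 ≤ f i 0) (K : ℝ) (hK : 0 ≤ K)
    (ε : ℝ) (hε : 0 < ε) (J : ℝ → ℝ) (hJ : IsEulerApprox T n f K ε J) :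
    MonotoneOn J (Set.Icc 0 T) ∧
    ConvexOn ℝ (Set.Icc 0 T) J ∧
    ∀ s ∈ Set.Icc 0 T, ∀ t ∈ Set.Icc 0 T,
      |J t - J s| ≤
        ((K / (n : ℝ)) *
          ∑ i, sSup ((fun u => max (-(f i u)) 0) '' Set.Icc 0 T)) * |t - s| :=
  stmt_16_general T n f hf K hK ε hε J hJ
end
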